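/- arXiv:1511.05678 — 8 statements merged into one kernel-verified Lean document; each statement's English description precedes it below -/
import Mathlib

section
/- Consider a two-layer rectifier network on ℝ^d with n hidden units, hidden-layer partition P, N of {1,…,n}, pre-activations a_k(x) = u_k · x + b_k and output bias w_0. For every input x ∈ ℝ^d, the network classifies x as positive (i.e. w_0 + Σ_{k∈P} max(0, a_k(x)) − Σ_{k∈N} max(0, a_k(x)) ≥ 0) if and only if there exists a subset S_1 ⊆ P such that for every subset S_2 ⊆ N one has w_0 + Σ_{k∈S_1} a_k(x) − Σ_{k∈S_2} a_k(x) ≥ 0. -/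
lemma aux_filter_sum {n : ℕ} (T : Finset (Fin n)) (f : Fin n → ℝ) :
    ∑ k ∈ T.filter (fun k => 0 ≤ f k), f k = ∑ k ∈ T, max 0 (f k) := by
  rw [Finset.sum_filter]
  apply Finset.sum_congr rfl
  intro k _
  by_cases h : 0 ≤ f k
  · simp [h, max_eq_right h]
  · simp [h, max_eq_left (le_of_not_ge h)]

lemma aux_subset_sum_le {n : ℕ} {S T : Finset (Fin n)} (h : S ⊆ T) (f : Fin n → ℝ) :
    ∑ k ∈ S, f k ≤ ∑ k ∈ T, max 0 (f k) := by
  calc ∑ k ∈ S, f k ≤ ∑ k ∈ S, max 0 (f k) :=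
        Finset.sum_le_sum (fun k _ => le_max_right _ _)
    _ ≤ ∑ k ∈ T, max 0 (f k) :=
        Finset.sum_le_sum_of_subset_of_nonneg h (fun k _ _ => le_max_left _ _)

/-- A two-layer rectifier network classifies `x` as positive iff
there exists `S₁ ⊆ P` such that for every `S₂ ⊆ N` the corresponding affine
inequality holds. -/
theorem relu_network_positive_iff_exists_forall
    (d n : ℕ) (u : Fin n → Fin d → ℝ) (b : Fin n → ℝ) (w0 : ℝ)
    (P N : Finset (Fin n)) (hdisj : Disjoint P N) (hcover : P ∪ N = Finset.univ)
    (a : Fin n → (Fin d → ℝ) → ℝ)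
    (ha : ∀ k x, a k x = (∑ i, u k i * x i) + b k)
    (x : Fin d → ℝ) :
    (0 ≤ w0 + ∑ k ∈ P, max 0 (a k x) - ∑ k ∈ N, max 0 (a k x)) ↔
    (∃ S1 ⊆ P, ∀ S2 ⊆ N,
      0 ≤ w0 + ∑ k ∈ S1, a k x - ∑ k ∈ S2, a k x) := by
  constructor
  · intro h
    refine ⟨P.filter (fun k => 0 ≤ a k x), Finset.filter_subset _ _, ?_⟩
    intro S2 hS2
    have h1 : ∑ k ∈ P.filter (fun k => 0 ≤ a k x), a k x = ∑ k ∈ P, max 0 (a k x) :=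
      aux_filter_sum P (fun k => a k x)
    have h2 : ∑ k ∈ S2, a k x ≤ ∑ k ∈ N, max 0 (a k x) := aux_subset_sum_le hS2 _
    linarith
  · rintro ⟨S1, hS1, hall⟩
    have h1 : ∑ k ∈ S1, a k x ≤ ∑ k ∈ P, max 0 (a k x) := aux_subset_sum_le hS1 _
    have h2 : ∑ k ∈ N.filter (fun k => 0 ≤ a k x), a k x = ∑ k ∈ N, max 0 (a k x) :=
      aux_filter_sum N (fun k => a k x)
    have := hall _ (Finset.filter_subset (fun k => 0 ≤ a k x) N)
    linarith
end

section
/- Consider a two-layer rectifier network on ℝ^d with n hidden units, hidden-layer partition P, N of {1,…,n}, pre-activations a_k(x) = u_k · x + b_k and output bias w_0. For every input x ∈ ℝ^d, the network classifies x as positive (i.e. w_0 + Σ_{k∈P} max(0, a_k(x)) − Σ_{k∈N} max(0, a_k(x)) ≥ 0) if and only if for every subset S_2 ⊆ N there exists a subset S_1 ⊆ P such that w_0 + Σ_{k∈S_1} a_k(x) − Σ_{k∈S_2} a_k(x) ≥ 0. -/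
/-!
Over subsets `S ⊆ T`, the sum `∑ k ∈ S, f k` is maximised by the set of indices where `f` is
nonnegative, and the maximum is `∑ k ∈ T, max 0 (f k)`. So the network output is
`w₀ + max_{S₁ ⊆ P} ∑_{S₁} a_k(x) - max_{S₂ ⊆ N} ∑_{S₂} a_k(x)`, and a difference of two maxima
is nonnegative iff every value of the subtracted family is dominated by some value of the other.
-/

open Finset

section PositivePart

variable {ι : Type*} (T : Finset ι) (f : ι → ℝ)

theorem sum_filter_nonneg_eq_sum_max_zero :
    ∑ k ∈ T with 0 ≤ f k, f k = ∑ k ∈ T, max 0 (f k) := by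
  rw [sum_filter]
  refine sum_congr rfl fun k _ => ?_
  split_ifs with h
  · exact (max_eq_right h).symm
  · exact (max_eq_left (le_of_not_ge h)).symm

variable {T} in
theorem sum_le_sum_max_zero_of_subset {S : Finset ι} (hST : S ⊆ T) :
    ∑ k ∈ S, f k ≤ ∑ k ∈ T, max 0 (f k) :=
  calc ∑ k ∈ S, f k ≤ ∑ k ∈ S, max 0 (f k) := sum_le_sum fun _ _ => le_max_right _ _
    _ ≤ ∑ k ∈ T, max 0 (f k) := sum_le_sum_of_subset_of_nonneg hST fun _ _ _ => le_max_left _ _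

theorem isGreatest_sum_subset :
    IsGreatest ((fun S => ∑ k ∈ S, f k) '' {S | S ⊆ T}) (∑ k ∈ T, max 0 (f k)) :=
  ⟨⟨T.filter (0 ≤ f ·), filter_subset _ _, sum_filter_nonneg_eq_sum_max_zero T f⟩,
    by rintro _ ⟨S, hST, rfl⟩; exact sum_le_sum_max_zero_of_subset f hST⟩

end PositivePart

theorem nonneg_add_sub_iff_forall_exists {α β : Type*} {s : Set α} {t : Set β}
    {g : α → ℝ} {h : β → ℝ} {A B : ℝ} (hA : IsGreatest (g '' s) A) (hB : IsGreatest (h '' t) B)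
    (w : ℝ) : 0 ≤ w + A - B ↔ ∀ y ∈ t, ∃ x ∈ s, 0 ≤ w + g x - h y := by
  obtain ⟨⟨x₀, hx₀, rfl⟩, hA⟩ := hA
  obtain ⟨⟨y₀, hy₀, rfl⟩, hB⟩ := hB
  constructor
  · intro hw y hy
    have : h y ≤ h y₀ := hB ⟨y, hy, rfl⟩
    exact ⟨x₀, hx₀, by linarith⟩
  · intro hw
    obtain ⟨x, hx, hxy⟩ := hw y₀ hy₀
    have : g x ≤ g x₀ := hA ⟨x, hx, rfl⟩
    linarith

theorem relu_network_positive_iff_forall_exists_general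
    (d n : ℕ) (w0 : ℝ)
    (P N : Finset (Fin n))
    (a : Fin n → (Fin d → ℝ) → ℝ)
    (x : Fin d → ℝ) :
    (0 ≤ w0 + ∑ k ∈ P, max 0 (a k x) - ∑ k ∈ N, max 0 (a k x)) ↔
    (∀ S2 ⊆ N, ∃ S1 ⊆ P,
      0 ≤ w0 + ∑ k ∈ S1, a k x - ∑ k ∈ S2, a k x) :=
  nonneg_add_sub_iff_forall_exists (isGreatest_sum_subset P (a · x))
    (isGreatest_sum_subset N (a · x)) w0

/-- A two-layer rectifier network classifies `x` as positive iff
for every `S₂ ⊆ N` there exists `S₁ ⊆ P` such that the corresponding affine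
inequality holds. -/
theorem relu_network_positive_iff_forall_exists
    (d n : ℕ) (u : Fin n → Fin d → ℝ) (b : Fin n → ℝ) (w0 : ℝ)
    (P N : Finset (Fin n)) (hdisj : Disjoint P N) (hcover : P ∪ N = Finset.univ)
    (a : Fin n → (Fin d → ℝ) → ℝ)
    (ha : ∀ k x, a k x = (∑ i, u k i * x i) + b k)
    (x : Fin d → ℝ) :
    (0 ≤ w0 + ∑ k ∈ P, max 0 (a k x) - ∑ k ∈ N, max 0 (a k x)) ↔
    (∀ S2 ⊆ N, ∃ S1 ⊆ P,
      0 ≤ w0 + ∑ k ∈ S1, a k x - ∑ k ∈ S2, a k x) :=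
  relu_network_positive_iff_forall_exists_general d n w0 P N a x
end

section
/- Consider a two-layer rectifier network on ℝ^d in which all n hidden units are negative (P = ∅, N = {1,…,n}), with pre-activations a_k(x) = u_k · x + b_k and output bias w_0. Then for every x ∈ ℝ^d, w_0 − Σ_{k=1}^n max(0, a_k(x)) ≥ 0 if and only if for every subset S ⊆ {1,…,n} one has w_0 − Σ_{k∈S} a_k(x) ≥ 0; i.e., the network's decision is a pure conjunction of the 2^n halfspace conditions indexed by subsets of {1,…,n}. -/
/-- a rectifier network whose hidden units are all negative decides
positively iff all of the `2^n` halfspace conditions (indexed by subsets of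
`{1,…,n}`) hold: a pure conjunction. -/
theorem relu_network_all_negative_is_conjunction
    (d n : ℕ) (u : Fin n → Fin d → ℝ) (b : Fin n → ℝ) (w0 : ℝ)
    (a : Fin n → (Fin d → ℝ) → ℝ)
    (ha : ∀ k x, a k x = (∑ i, u k i * x i) + b k)
    (x : Fin d → ℝ) :
    (0 ≤ w0 - ∑ k, max 0 (a k x)) ↔
    (∀ S : Finset (Fin n), 0 ≤ w0 - ∑ k ∈ S, a k x) := by
  constructor
  · intro h S
    have h1 : ∑ k ∈ S, a k x ≤ ∑ k ∈ S, max 0 (a k x) :=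
      Finset.sum_le_sum fun k _ => le_max_right _ _
    have h2 : ∑ k ∈ S, max 0 (a k x) ≤ ∑ k, max 0 (a k x) :=
      Finset.sum_le_sum_of_subset_of_nonneg (Finset.subset_univ S)
        (fun k _ _ => le_max_left _ _)
    linarith
  · intro h
    have key : ∑ k, max 0 (a k x) = ∑ k ∈ Finset.univ.filter (fun k => 0 ≤ a k x), a k x := by
      rw [Finset.sum_filter]
      apply Finset.sum_congr rfl
      intro k _
      by_cases hk : 0 ≤ a k x
      · simp [hk, max_eq_right hk]
      · simp [hk, max_eq_left (le_of_not_ge hk)]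
    rw [key]
    exact h _
end

section
/- Let F : ℝ^d → {±1} be computed by a two-layer rectifier network with n hidden units that are all positive: F(x) = sgn(w_0 + Σ_{k=1}^n R(u_k · x + b_k)) for some u_k ∈ ℝ^d, b_k ∈ ℝ, w_0 ∈ ℝ. Then there exists a two-layer threshold network with at most 2^n − 1 hidden units computing the same function: there exist m ≤ 2^n − 1, weight vectors v_j ∈ ℝ^d, biases d_j ∈ ℝ, output weights w_j ∈ ℝ (j = 1,…,m) and an output bias w_0' ∈ ℝ such that for every x ∈ ℝ^d, F(x) = sgn(w_0' + Σ_{j=1}^m w_j sgn(v_j · x + d_j)). -/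
/-- `sgn x = 1` if `x ≥ 0`, and `-1` otherwise. -/
noncomputable def sgn (x : ℝ) : ℝ := if 0 ≤ x then 1 else -1

lemma sgn_eq_one {x : ℝ} (h : 0 ≤ x) : sgn x = 1 := if_pos h

lemma sgn_eq_neg_one {x : ℝ} (h : ¬ 0 ≤ x) : sgn x = -1 := if_neg h

lemma neg_one_le_sgn (x : ℝ) : -1 ≤ sgn x := by
  unfold sgn; split <;> norm_num

/-- every two-layer rectifier network with `n` all-positive hidden
units is computed by some two-layer threshold network with at most `2^n - 1`
hidden units. -/
theorem relu_all_positive_to_threshold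
    (d n : ℕ) (u : Fin n → Fin d → ℝ) (b : Fin n → ℝ) (w0 : ℝ)
    (F : (Fin d → ℝ) → ℝ)
    (hF : ∀ x, F x = sgn (w0 + ∑ k, max 0 ((∑ i, u k i * x i) + b k))) :
    ∃ m ≤ 2 ^ n - 1, ∃ (v : Fin m → Fin d → ℝ) (dd : Fin m → ℝ)
      (w : Fin m → ℝ) (w0' : ℝ),
      ∀ x : Fin d → ℝ,
        F x = sgn (w0' + ∑ j, w j * sgn ((∑ i, v j i * x i) + dd j)) := by
  classical
  have hcard : Fintype.card {S : Finset (Fin n) // S ≠ ∅} = 2 ^ n - 1 := by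
    have h1 : Fintype.card {S : Finset (Fin n) // S = ∅} = 1 :=
      Fintype.card_subtype_eq (∅ : Finset (Fin n))
    have h2 : Fintype.card (Finset (Fin n)) = 2 ^ n := by
      simp [Fintype.card_finset]
    have := Fintype.card_subtype_compl (fun S : Finset (Fin n) => S = ∅)
    simp only [h1, h2] at this
    exact this
  let e : {S : Finset (Fin n) // S ≠ ∅} ≃ Fin (2 ^ n - 1) :=
    Fintype.equivFinOfCardEq hcard
  refine ⟨2 ^ n - 1, le_refl _,
    fun j i => ∑ k ∈ (e.symm j).1, u k i,
    fun j => w0 + ∑ k ∈ (e.symm j).1, b k,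
    fun _ => 1, ((2 : ℝ) ^ n - 1) + sgn w0, fun x => ?_⟩
  rw [hF]
  set a : Fin n → ℝ := fun k => (∑ i, u k i * x i) + b k with ha
  set g : Finset (Fin n) → ℝ := fun S => sgn (w0 + ∑ k ∈ S, a k) with hg
  -- rewrite each hidden unit's argument
  have harg : ∀ j : Fin (2 ^ n - 1),
      (∑ i, (∑ k ∈ (e.symm j).1, u k i) * x i) + (w0 + ∑ k ∈ (e.symm j).1, b k)
        = w0 + ∑ k ∈ (e.symm j).1, a k := by
    intro j
    simp only [ha, Finset.sum_mul, Finset.sum_add_distrib]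
    rw [Finset.sum_comm]
    ring
  have hsum : ∑ j : Fin (2 ^ n - 1),
      (1 : ℝ) * sgn ((∑ i, (∑ k ∈ (e.symm j).1, u k i) * x i)
        + (w0 + ∑ k ∈ (e.symm j).1, b k))
      = ∑ S ∈ Finset.univ.erase (∅ : Finset (Fin n)), g S := by
    have h1 : ∀ j, (1 : ℝ) * sgn ((∑ i, (∑ k ∈ (e.symm j).1, u k i) * x i)
        + (w0 + ∑ k ∈ (e.symm j).1, b k)) = g (e.symm j).1 := by
      intro j; rw [one_mul, harg j]
    rw [Finset.sum_congr rfl fun j _ => h1 j]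
    rw [Equiv.sum_comp e.symm (fun S : {S : Finset (Fin n) // S ≠ ∅} => g S.1)]
    exact (Finset.sum_subtype _ (by simp) g).symm
  rw [hsum]
  have hgtot : ((2 : ℝ) ^ n - 1) + sgn w0 + ∑ S ∈ Finset.univ.erase (∅ : Finset (Fin n)), g S
      = ((2 : ℝ) ^ n - 1) + ∑ S : Finset (Fin n), g S := by
    have : g ∅ = sgn w0 := by simp [hg]
    rw [add_assoc, ← this, Finset.add_sum_erase _ g (Finset.mem_univ ∅)]
  rw [hgtot]
  have hcardreal : ((Finset.univ : Finset (Finset (Fin n))).card : ℝ) = 2 ^ n := by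
    simp [Finset.card_univ, Fintype.card_finset]
  by_cases hpos : ∃ S : Finset (Fin n), 0 ≤ w0 + ∑ k ∈ S, a k
  · obtain ⟨S, hS⟩ := hpos
    have hL : 0 ≤ w0 + ∑ k, max 0 (a k) := by
      have h1 : ∑ k ∈ S, a k ≤ ∑ k, max 0 (a k) := by
        calc ∑ k ∈ S, a k ≤ ∑ k ∈ S, max 0 (a k) :=
              Finset.sum_le_sum fun k _ => le_max_right _ _
          _ ≤ ∑ k, max 0 (a k) :=
              Finset.sum_le_sum_of_subset_of_nonneg (Finset.subset_univ S)
                (fun k _ _ => le_max_left _ _)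
      linarith
    have hR : (0 : ℝ) ≤ ((2 : ℝ) ^ n - 1) + ∑ S' : Finset (Fin n), g S' := by
      have hsplit : ∑ S' : Finset (Fin n), g S'
          = g S + ∑ S' ∈ Finset.univ.erase S, g S' :=
        (Finset.add_sum_erase _ g (Finset.mem_univ S)).symm
      have hbound : -(((Finset.univ.erase S).card : ℝ))
          ≤ ∑ S' ∈ Finset.univ.erase S, g S' := by
        calc -(((Finset.univ.erase S).card : ℝ))
            = ∑ _S' ∈ Finset.univ.erase S, (-1 : ℝ) := by
              simp [Finset.sum_const]
          _ ≤ ∑ S' ∈ Finset.univ.erase S, g S' :=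
              Finset.sum_le_sum fun S' _ => neg_one_le_sgn _
      have hce : ((Finset.univ.erase S).card : ℝ) = 2 ^ n - 1 := by
        rw [Finset.card_erase_of_mem (Finset.mem_univ S)]
        have h2 : (1 : ℕ) ≤ (Finset.univ : Finset (Finset (Fin n))).card := by
          rw [Finset.card_univ, Fintype.card_finset]
          exact Nat.one_le_two_pow
        push_cast [Nat.cast_sub h2]
        rw [hcardreal]
      have hgS : g S = 1 := sgn_eq_one hS
      rw [hsplit, hgS]
      rw [hce] at hbound
      linarith
    rw [sgn_eq_one hL, sgn_eq_one hR]
  · push_neg at hpos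
    have hL : ¬ (0 : ℝ) ≤ w0 + ∑ k, max 0 (a k) := by
      have heq : ∑ k, max 0 (a k) = ∑ k ∈ Finset.univ.filter (fun k => 0 ≤ a k), a k := by
        rw [Finset.sum_filter]
        refine Finset.sum_congr rfl fun k _ => ?_
        rcases le_or_gt 0 (a k) with h | h
        · simp [max_eq_right h, h]
        · simp [max_eq_left h.le, not_le.mpr h]
      rw [heq]
      exact not_le.mpr (hpos _)
    have hR : ¬ (0 : ℝ) ≤ ((2 : ℝ) ^ n - 1) + ∑ S : Finset (Fin n), g S := by
      have : ∑ S : Finset (Fin n), g S = -(2 : ℝ) ^ n := by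
        have h1 : ∀ S : Finset (Fin n), g S = -1 := fun S =>
          sgn_eq_neg_one (not_le.mpr (hpos S))
        rw [Finset.sum_congr rfl fun S _ => h1 S, Finset.sum_const, hcardreal.symm]
        simp
      rw [this]; norm_num
    rw [sgn_eq_neg_one hL, sgn_eq_neg_one hR]
end

section
/- Let F : ℝ^d → {±1} be computed by a two-layer rectifier network with n hidden units that are all negative: F(x) = sgn(w_0 − Σ_{k=1}^n R(u_k · x + b_k)) for some u_k ∈ ℝ^d, b_k ∈ ℝ, w_0 ∈ ℝ. Then there exists a two-layer threshold network with at most 2^n − 1 hidden units computing the same function: there exist m ≤ 2^n − 1, weight vectors v_j ∈ ℝ^d, biases d_j ∈ ℝ, output weights w_j ∈ ℝ (j = 1,…,m) and an output bias w_0' ∈ ℝ such that for every x ∈ ℝ^d, F(x) = sgn(w_0' + Σ_{j=1}^m w_j sgn(v_j · x + d_j)). -/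
/-- every two-layer rectifier network with `n` all-negative hidden
units is computed by some two-layer threshold network with at most `2^n - 1`
hidden units. -/
theorem relu_all_negative_to_threshold
    (d n : ℕ) (u : Fin n → Fin d → ℝ) (b : Fin n → ℝ) (w0 : ℝ)
    (F : (Fin d → ℝ) → ℝ)
    (hF : ∀ x, F x = sgn (w0 - ∑ k, max 0 ((∑ i, u k i * x i) + b k))) :
    ∃ m ≤ 2 ^ n - 1, ∃ (v : Fin m → Fin d → ℝ) (dd : Fin m → ℝ)
      (w : Fin m → ℝ) (w0' : ℝ),
      ∀ x : Fin d → ℝ,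
        F x = sgn (w0' + ∑ j, w j * sgn ((∑ i, v j i * x i) + dd j)) := by
  classical
  set m := Fintype.card {S : Finset (Fin n) // S.Nonempty} with hm
  have hmcard : m = 2 ^ n - 1 := by
    have h1 : m = Fintype.card {S : Finset (Fin n) // ¬ S = ∅} :=
      Fintype.card_congr (Equiv.subtypeEquivRight (fun S => by
        simp [Finset.nonempty_iff_ne_empty]))
    rw [h1, Fintype.card_subtype_compl, Fintype.card_subtype_eq (∅ : Finset (Fin n)),
      Fintype.card_finset, Fintype.card_fin]
  refine ⟨m, le_of_eq hmcard, ?_⟩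
  have e : {S : Finset (Fin n) // S.Nonempty} ≃ Fin m := Fintype.equivFin _
  set S : Fin m → Finset (Fin n) := fun j => (e.symm j : Finset (Fin n)) with hS
  refine ⟨fun j i => -∑ k ∈ S j, u k i, fun j => w0 - ∑ k ∈ S j, b k,
    fun _ => 1, (if 0 ≤ w0 then 1 - (m : ℝ) else -(1 + (m : ℝ))), ?_⟩
  intro x
  set a : Fin n → ℝ := fun k => (∑ i, u k i * x i) + b k with ha
  have hunit : ∀ j : Fin m,
      (∑ i, (-∑ k ∈ S j, u k i) * x i) + (w0 - ∑ k ∈ S j, b k)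
        = w0 - ∑ k ∈ S j, a k := by
    intro j
    have h1 : ∑ i, (∑ k ∈ S j, u k i) * x i = ∑ k ∈ S j, ∑ i, u k i * x i := by
      simp only [Finset.sum_mul]
      rw [Finset.sum_comm]
    simp only [neg_mul, Finset.sum_neg_distrib, ha, Finset.sum_add_distrib]
    rw [h1]
    ring
  -- key equivalence
  have key : (0 ≤ w0 - ∑ k, max 0 (a k)) ↔
      (0 ≤ w0 ∧ ∀ j : Fin m, 0 ≤ w0 - ∑ k ∈ S j, a k) := by
    have hmax : ∑ k, max 0 (a k)
        = ∑ k ∈ Finset.univ.filter (fun k => 0 ≤ a k), a k := by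
      rw [Finset.sum_filter]
      refine Finset.sum_congr rfl fun k _ => ?_
      by_cases h : 0 ≤ a k
      · simp [h, max_eq_right h]
      · simp [h, max_eq_left (le_of_lt (lt_of_not_ge h))]
    constructor
    · intro h
      constructor
      · have h0 : 0 ≤ ∑ k, max 0 (a k) :=
          Finset.sum_nonneg fun k _ => le_max_left _ _
        linarith
      · intro j
        have hle : ∑ k ∈ S j, a k ≤ ∑ k, max 0 (a k) :=
          calc ∑ k ∈ S j, a k ≤ ∑ k ∈ S j, max 0 (a k) :=
                Finset.sum_le_sum fun k _ => le_max_right _ _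
            _ ≤ ∑ k, max 0 (a k) :=
                Finset.sum_le_sum_of_subset_of_nonneg (Finset.subset_univ _)
                  (fun k _ _ => le_max_left _ _)
        linarith
    · rintro ⟨hw0, hall⟩
      rw [hmax]
      rcases (Finset.univ.filter (fun k => 0 ≤ a k)).eq_empty_or_nonempty with hT | hT
      · rw [hT]; simpa using hw0
      · obtain ⟨j, hj⟩ : ∃ j, S j = Finset.univ.filter (fun k => 0 ≤ a k) :=
          ⟨e ⟨_, hT⟩, by simp [hS]⟩
        rw [← hj]; exact hall j
  -- finish
  rw [hF x]
  have hsum : ∀ j : Fin m, (1 : ℝ) * sgn ((∑ i, (-∑ k ∈ S j, u k i) * x i)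
      + (w0 - ∑ k ∈ S j, b k)) = sgn (w0 - ∑ k ∈ S j, a k) := by
    intro j; rw [hunit j, one_mul]
  rw [Finset.sum_congr rfl fun j _ => hsum j]
  have hsgn1 : ∀ z : ℝ, 0 ≤ z → sgn z = 1 := fun z h => if_pos h
  have hsgn2 : ∀ z : ℝ, ¬ 0 ≤ z → sgn z = -1 := fun z h => if_neg h
  by_cases hw : 0 ≤ w0
  · by_cases hq : ∀ j : Fin m, 0 ≤ w0 - ∑ k ∈ S j, a k
    · have hL : (0 : ℝ) ≤ w0 - ∑ k, max 0 (a k) := key.mpr ⟨hw, hq⟩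
      have hone : ∀ j : Fin m, sgn (w0 - ∑ k ∈ S j, a k) = 1 :=
        fun j => if_pos (hq j)
      have hR : ∑ j : Fin m, sgn (w0 - ∑ k ∈ S j, a k) = (m : ℝ) := by
        rw [Finset.sum_congr rfl fun j _ => hone j]; simp
      rw [hsgn1 _ hL, hR, if_pos hw,
        hsgn1 _ (by linarith : (0:ℝ) ≤ 1 - (m:ℝ) + (m:ℝ))]
    · push_neg at hq
      obtain ⟨j0, hj0⟩ := hq
      have hL : ¬ (0 : ℝ) ≤ w0 - ∑ k, max 0 (a k) := by
        intro h
        exact absurd ((key.mp h).2 j0) (not_le.mpr hj0)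
      have hR : ∑ j : Fin m, sgn (w0 - ∑ k ∈ S j, a k)
          ≤ ∑ j : Fin m, (if j = j0 then (-1 : ℝ) else 1) := by
        refine Finset.sum_le_sum fun j _ => ?_
        by_cases h : j = j0
        · subst h; simp [sgn, not_le.mpr hj0]
        · simp only [h, if_neg h]
          unfold sgn; split <;> norm_num
      have hR2 : ∑ j : Fin m, (if j = j0 then (-1 : ℝ) else 1) = (m : ℝ) - 2 := by
        have : ∀ j : Fin m, (if j = j0 then (-1 : ℝ) else 1)
            = 1 + (if j = j0 then (-2 : ℝ) else 0) := by
          intro j; by_cases h : j = j0 <;> simp [h] <;> try norm_num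
        rw [Finset.sum_congr rfl fun j _ => this j, Finset.sum_add_distrib,
          Finset.sum_ite_eq' Finset.univ j0 (fun _ => (-2 : ℝ))]
        simp; ring
      have hneg : (if 0 ≤ w0 then 1 - (m : ℝ) else -(1 + (m : ℝ)))
          + ∑ j : Fin m, sgn (w0 - ∑ k ∈ S j, a k) < 0 := by
        rw [if_pos hw]
        have := hR.trans (le_of_eq hR2)
        linarith
      rw [hsgn2 _ hL, hsgn2 _ (not_le.mpr hneg)]
  · have hL : ¬ (0 : ℝ) ≤ w0 - ∑ k, max 0 (a k) := by
      intro h; exact hw (key.mp h).1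
    have hR : ∑ j : Fin m, sgn (w0 - ∑ k ∈ S j, a k) ≤ (m : ℝ) := by
      calc ∑ j : Fin m, sgn (w0 - ∑ k ∈ S j, a k) ≤ ∑ _j : Fin m, (1 : ℝ) := by
            refine Finset.sum_le_sum fun j _ => ?_
            unfold sgn; split <;> norm_num
        _ = (m : ℝ) := by simp
    have hneg : (if 0 ≤ w0 then 1 - (m : ℝ) else -(1 + (m : ℝ)))
        + ∑ j : Fin m, sgn (w0 - ∑ k ∈ S j, a k) < 0 := by
      rw [if_neg hw]; linarith
    rw [hsgn2 _ hL, hsgn2 _ (not_le.mpr hneg)]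
end

section
/- Let a two-layer threshold network on ℝ^d be given by weight vectors v_k ∈ ℝ^d, biases d_k ∈ ℝ, output weights c_k ∈ ℝ (k = 1,…,n) and output bias c_0, computing T(x) = sgn(c_0 + Σ_{k=1}^n c_k sgn(v_k · x + d_k)). Then for every ε > 0 there exists a two-layer rectifier network with 2n hidden units — namely weight vectors ũ_j ∈ ℝ^d, biases b̃_j ∈ ℝ, output weights w̃_j ∈ ℝ (j = 1,…,2n) and output bias w̃_0 — such that for every x ∈ ℝ^d satisfying |v_k · x + d_k| ≥ ε for all k = 1,…,n, one has T(x) = sgn(w̃_0 + Σ_{j=1}^{2n} w̃_j max(0, ũ_j · x + b̃_j)). -/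
/-- any two-layer threshold network with `n` hidden units is
computed, for every `ε > 0` and on all inputs lying at distance at least `ε`
from every hidden hyperplane, by a two-layer rectifier network with `2n`
hidden units. -/
theorem threshold_network_to_relu_network
    (d n : ℕ) (v : Fin n → Fin d → ℝ) (dd : Fin n → ℝ)
    (c : Fin n → ℝ) (c0 : ℝ)
    (T : (Fin d → ℝ) → ℝ)
    (hT : ∀ x, T x = sgn (c0 + ∑ k, c k * sgn ((∑ i, v k i * x i) + dd k))) :
    ∀ ε > (0 : ℝ),
      ∃ (u' : Fin (2 * n) → Fin d → ℝ) (b' : Fin (2 * n) → ℝ)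
        (w' : Fin (2 * n) → ℝ) (w0' : ℝ),
        ∀ x : Fin d → ℝ,
          (∀ k : Fin n, ε ≤ |(∑ i, v k i * x i) + dd k|) →
          T x = sgn (w0' + ∑ j, w' j * max 0 ((∑ i, u' j i * x i) + b' j)) := by
  intro ε hε
  refine ⟨fun j => Fin.addCases (motive := fun _ => Fin d → ℝ)
      (fun k => v k) (fun k => v k) (finCongr (two_mul n) j),
    fun j => Fin.addCases (motive := fun _ => ℝ)
      (fun k => dd k + ε) (fun k => dd k) (finCongr (two_mul n) j),
    fun j => Fin.addCases (motive := fun _ => ℝ)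
      (fun k => 2 / ε * c k) (fun k => -(2 / ε * c k)) (finCongr (two_mul n) j),
    c0 - ∑ k, c k, ?_⟩
  intro x hx
  rw [hT]
  congr 1
  set z : Fin n → ℝ := fun k => (∑ i, v k i * x i) + dd k with hz
  have hsum : ∀ (F : Fin (n + n) → ℝ),
      (∑ j : Fin (2 * n), F (finCongr (two_mul n) j)) = ∑ j : Fin (n + n), F j :=
    fun F => Fintype.sum_equiv (finCongr (two_mul n)) _ _ (fun _ => rfl)
  rw [hsum (fun j =>
      Fin.addCases (motive := fun _ => ℝ) (fun k => 2 / ε * c k)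
        (fun k => -(2 / ε * c k)) j *
      max 0 ((∑ i, Fin.addCases (motive := fun _ => Fin d → ℝ)
        (fun k => v k) (fun k => v k) j i * x i) +
        Fin.addCases (motive := fun _ => ℝ) (fun k => dd k + ε) (fun k => dd k) j)),
    Fin.sum_univ_add]
  simp only [Fin.addCases_left, Fin.addCases_right]
  have hterm : ∀ k : Fin n,
      2 / ε * c k * max 0 (z k + ε) + -(2 / ε * c k) * max 0 (z k)
        = c k * sgn (z k) + c k := by
    intro k
    have hk : ε ≤ |z k| := hx k
    unfold sgn
    rcases le_or_gt 0 (z k) with h | h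
    · have hge : ε ≤ z k := by rwa [abs_of_nonneg h] at hk
      rw [max_eq_right (by linarith), max_eq_right h, if_pos h]
      field_simp
      ring
    · have hle : z k ≤ -ε := by rw [abs_of_neg h] at hk; linarith
      rw [max_eq_left (by linarith), max_eq_left (by linarith), if_neg (not_le.2 h)]
      ring
  have harg : ∀ k : Fin n, (∑ i, v k i * x i) + (dd k + ε) = z k + ε := by
    intro k; rw [hz, ← add_assoc]
  simp only [harg]
  rw [← Finset.sum_add_distrib, Finset.sum_congr rfl (fun k _ => hterm k),
    Finset.sum_add_distrib]
  ring
end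

section
/- Let v_1, v_2 ∈ ℝ^d, d_1, d_2 ∈ ℝ, and let p > 0, q > 0 with v_3 = p·v_1 + q·v_2 and d_3 > p·d_1 + q·d_2. Set r = 1/(d_3 − p·d_1 − q·d_2), u_1 = p·r·v_1, u_2 = q·r·v_2, b_1 = p·r·d_1 + 1, b_2 = q·r·d_2 + 1. Then for every x ∈ ℝ^d, sgn(2 + sgn(v_1·x + d_1) + sgn(v_2·x + d_2) + sgn(v_3·x + d_3)) = sgn(−1 + max(0, u_1·x + b_1) + max(0, u_2·x + b_2)); i.e., the disjunction of three threshold units whose weight vectors are linearly dependent (but whose biases are not in the corresponding relation) is computed exactly by a two-layer rectifier network with two hidden units. -/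
theorem sgn_eq_sgn_of_nonneg_iff {x y : ℝ} (h : 0 ≤ x ↔ 0 ≤ y) : sgn x = sgn y := by
  simp only [sgn, h]

theorem two_add_sgn_add_sgn_add_sgn_nonneg_iff (a b c : ℝ) :
    0 ≤ 2 + sgn a + sgn b + sgn c ↔ 0 ≤ a ∨ 0 ≤ b ∨ 0 ≤ c := by
  unfold sgn
  split_ifs <;> grind

theorem neg_one_add_max_add_max_nonneg_iff (a b : ℝ) :
    0 ≤ -1 + max 0 (a + 1) + max 0 (b + 1) ↔ 0 ≤ a ∨ 0 ≤ b ∨ 0 ≤ a + b + 1 := by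
  grind

theorem sum_linear_combination_mul {ι : Type*} [Fintype ι] (p q : ℝ) (v w x : ι → ℝ) :
    ∑ i, (p * v i + q * w i) * x i = p * ∑ i, v i * x i + q * ∑ i, w i * x i := by
  simp only [add_mul, mul_assoc, Finset.sum_add_distrib, ← Finset.mul_sum]

theorem sum_const_mul_mul {ι : Type*} [Fintype ι] (c : ℝ) (v x : ι → ℝ) :
    ∑ i, c * v i * x i = c * ∑ i, v i * x i := by
  simp only [mul_assoc, ← Finset.mul_sum]

/-- the disjunction of three threshold units with linearly
dependent weight vectors (but bias not in the corresponding relation) is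
computed exactly by a two-layer rectifier network with two hidden units. -/
theorem three_thresholds_as_two_relus
    (dim : ℕ) (v1 v2 v3 : Fin dim → ℝ) (d1 d2 d3 : ℝ) (p q : ℝ)
    (hp : 0 < p) (hq : 0 < q)
    (hv : v3 = fun i => p * v1 i + q * v2 i)
    (hd : p * d1 + q * d2 < d3)
    (r : ℝ) (hr : r = 1 / (d3 - p * d1 - q * d2))
    (u1 u2 : Fin dim → ℝ) (b1 b2 : ℝ)
    (hu1 : u1 = fun i => p * r * v1 i) (hu2 : u2 = fun i => q * r * v2 i)
    (hb1 : b1 = p * r * d1 + 1) (hb2 : b2 = q * r * d2 + 1) :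
    ∀ x : Fin dim → ℝ,
      sgn (2 + sgn ((∑ i, v1 i * x i) + d1) + sgn ((∑ i, v2 i * x i) + d2)
             + sgn ((∑ i, v3 i * x i) + d3)) =
      sgn (-1 + max 0 ((∑ i, u1 i * x i) + b1) + max 0 ((∑ i, u2 i * x i) + b2)) := by
  intro x
  subst hv hu1 hu2 hb1 hb2
  set A := (∑ i, v1 i * x i) + d1
  set B := (∑ i, v2 i * x i) + d2
  set s := d3 - p * d1 - q * d2 with hs_def
  have hs : 0 < s := by linarith
  have hr_pos : 0 < r := hr ▸ one_div_pos.2 hs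
  have hv3 : (∑ i, (p * v1 i + q * v2 i) * x i) + d3 = p * A + q * B + s := by
    rw [sum_linear_combination_mul]; ring
  have hu1 : (∑ i, p * r * v1 i * x i) + (p * r * d1 + 1) = p * r * A + 1 := by
    rw [sum_const_mul_mul]; ring
  have hu2 : (∑ i, q * r * v2 i * x i) + (q * r * d2 + 1) = q * r * B + 1 := by
    rw [sum_const_mul_mul]; ring
  have hscale : p * r * A + q * r * B + 1 = r * (p * A + q * B + s) := by
    rw [hr]; field_simp
  apply sgn_eq_sgn_of_nonneg_iff
  rw [hv3, hu1, hu2, two_add_sgn_add_sgn_add_sgn_nonneg_iff, neg_one_add_max_add_max_nonneg_iff, hscale,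
    mul_nonneg_iff_of_pos_left (by positivity), mul_nonneg_iff_of_pos_left (by positivity),
    mul_nonneg_iff_of_pos_left hr_pos]
end

section
/- Let n ≥ 1, and let u_1,…,u_n ∈ ℝ^d, b_1,…,b_n ∈ ℝ and w_0 ∈ ℝ. For every subset S ⊆ {1,…,n} define v_S = Σ_{k∈S} u_k ∈ ℝ^d and d_S = w_0 + Σ_{k∈S} b_k ∈ ℝ (this is the factorization of the threshold weights through the n × 2^n binary encoding matrix). Then for every x ∈ ℝ^d, sgn((2^n − 1) + Σ_{S ⊆ {1,…,n}} sgn(v_S · x + d_S)) = sgn(w_0 + Σ_{k=1}^n max(0, u_k · x + b_k)); i.e., the two-layer threshold network with 2^n hidden units computing the disjunction of the units (v_S, d_S) has the same decision function as the two-layer rectifier network with only n hidden units (u_k, b_k) and output bias w_0. -/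
/-- if the weights of the `2^n` hidden threshold units factor
through the binary encoding matrix, i.e. `v_S = Σ_{k∈S} u_k` and
`d_S = w_0 + Σ_{k∈S} b_k`, then the disjunction threshold network with `2^n`
hidden units has the same decision function as the rectifier network with
`n` hidden units `(u_k, b_k)` and output bias `w_0`. -/
theorem binary_encoding_threshold_eq_relu
    (n d : ℕ) (hn : 1 ≤ n) (u : Fin n → Fin d → ℝ) (b : Fin n → ℝ) (w0 : ℝ) :
    ∀ x : Fin d → ℝ,
      sgn (((2 : ℝ) ^ n - 1) +
        ∑ S : Finset (Fin n),
          sgn ((∑ i, (∑ k ∈ S, u k i) * x i) + (w0 + ∑ k ∈ S, b k))) =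
      sgn (w0 + ∑ k, max 0 ((∑ i, u k i * x i) + b k)) := by
  intro x
  set a : Fin n → ℝ := fun k => (∑ i, u k i * x i) + b k with ha
  have key : ∀ S : Finset (Fin n),
      (∑ i, (∑ k ∈ S, u k i) * x i) + (w0 + ∑ k ∈ S, b k)
        = w0 + ∑ k ∈ S, a k := by
    intro S
    have : (∑ i, (∑ k ∈ S, u k i) * x i) = ∑ k ∈ S, ∑ i, u k i * x i := by
      simp_rw [Finset.sum_mul]
      exact Finset.sum_comm
    rw [this, ha, Finset.sum_add_distrib]
    ring
  simp only [key]
  have hmax : ∀ k, max 0 (a k) = if 0 ≤ a k then a k else 0 := by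
    intro k; exact max_def 0 (a k)
  have hcard : (Finset.univ : Finset (Finset (Fin n))).card = 2 ^ n := by
    simp [Finset.card_univ]
  by_cases h : 0 ≤ w0 + ∑ k, max 0 (a k)
  · set S0 : Finset (Fin n) := Finset.univ.filter (fun k => 0 ≤ a k) with hS0
    have hS0sum : ∑ k ∈ S0, a k = ∑ k, max 0 (a k) := by
      rw [hS0, Finset.sum_filter]
      exact Finset.sum_congr rfl fun k _ => (hmax k).symm
    have h0 : sgn (w0 + ∑ k ∈ S0, a k) = 1 := by
      rw [hS0sum]; simp [sgn, h]
    have hlb : ∀ S : Finset (Fin n), -1 ≤ sgn (w0 + ∑ k ∈ S, a k) := by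
      intro S; unfold sgn; split <;> norm_num
    have hsum : (2 : ℝ) - 2 ^ n ≤ ∑ S : Finset (Fin n), sgn (w0 + ∑ k ∈ S, a k) := by
      rw [← Finset.sum_erase_add _ _ (Finset.mem_univ S0), h0]
      have : ∑ S ∈ Finset.univ.erase S0, (-1 : ℝ) ≤
          ∑ S ∈ Finset.univ.erase S0, sgn (w0 + ∑ k ∈ S, a k) :=
        Finset.sum_le_sum fun S _ => hlb S
      have hc : (Finset.univ.erase S0).card = 2 ^ n - 1 := by
        rw [Finset.card_erase_of_mem (Finset.mem_univ S0), hcard]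
      have hpow : (1 : ℕ) ≤ 2 ^ n := Nat.one_le_two_pow
      rw [Finset.sum_const, hc, nsmul_eq_mul, Nat.cast_sub hpow] at this
      push_cast at this
      linarith
    have : sgn (((2 : ℝ) ^ n - 1) + ∑ S : Finset (Fin n), sgn (w0 + ∑ k ∈ S, a k)) = 1 := by
      unfold sgn at hsum ⊢; rw [if_pos]; linarith
    rw [this, sgn, if_pos h]
  · have hneg : ∀ S : Finset (Fin n), sgn (w0 + ∑ k ∈ S, a k) = -1 := by
      intro S
      have h1 : ∑ k ∈ S, a k ≤ ∑ k ∈ S, max 0 (a k) :=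
        Finset.sum_le_sum fun k _ => le_max_right 0 (a k)
      have h2 : ∑ k ∈ S, max 0 (a k) ≤ ∑ k, max 0 (a k) :=
        Finset.sum_le_sum_of_subset_of_nonneg (Finset.subset_univ S)
          fun k _ _ => le_max_left 0 (a k)
      unfold sgn; rw [if_neg]; push_neg at h; linarith
    simp only [hneg, Finset.sum_const, hcard, nsmul_eq_mul]
    have : ((2 : ℝ) ^ n - 1) + (2 ^ n : ℕ) * (-1) = -1 := by push_cast; ring
    rw [this]
    unfold sgn
    rw [if_neg (by norm_num), if_neg (by push_neg at h; linarith)]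
end
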